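/- arXiv:1107.2325 — 5 statements merged into one kernel-verified Lean document; each statement's English description precedes it below -/
import Mathlib

section
/- If ξ_1, ξ_2, … are independent random variables taking values in the p-adic integers J_p such that P(ξ_n = λ) = 0 for every n and every λ ∈ J_p, then almost surely the set {ξ_n : n < ω} is algebraically independent over ℚ. -/
/-!
The zero set of a nonzero polynomial is null for every finite product of atomless measures on an
integral domain: slicing along one variable, the leading coefficient in that variable vanishes only
on a null set by induction, and elsewhere the slice is a finite root set. By independence the joint
law of finitely many of the `ξ n` is such a product, and since there are only countably many
polynomials over `ℚ`, almost surely none of them vanishes at the sequence.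
-/

open MeasureTheory ProbabilityTheory MvPolynomial

instance MvPolynomial.countable {σ R : Type*} [CommSemiring R] [Countable σ] [Countable R] :
    Countable (MvPolynomial σ R) :=
  (AddMonoidAlgebra.coeff_injective (R := R) (M := σ →₀ ℕ)).countable

theorem MeasureTheory.NullSingletonClass.map_of_injective {α β : Type*} [MeasurableSpace α]
    [MeasurableSpace β] [MeasurableSingletonClass β] {μ : Measure α} [NullSingletonClass μ]
    {f : α → β} (hf : Measurable f) (hinj : f.Injective) : NullSingletonClass (μ.map f) :=
  ⟨fun y => by
    rw [Measure.map_apply hf (measurableSet_singleton y)]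
    exact (Set.subsingleton_singleton.preimage hinj).countable.measure_zero μ⟩

namespace MvPolynomial

variable {R : Type*} [MeasurableSpace R]

theorem measurable_eval [CommSemiring R] [MeasurableAdd₂ R] [MeasurableMul₂ R] {σ : Type*}
    (q : MvPolynomial σ R) : Measurable fun x : σ → R => eval x q := by
  induction q using MvPolynomial.induction_on with
  | C a => simp only [eval_C]; exact measurable_const
  | add q r hq hr => simp only [map_add]; exact hq.add hr
  | mul_X q i hq => simp only [map_mul, eval_X]; exact hq.mul (measurable_pi_apply i)

theorem measurableSet_setOf_eval_eq_zero [CommSemiring R] [MeasurableAdd₂ R] [MeasurableMul₂ R]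
    [MeasurableSingletonClass R] {σ : Type*} (q : MvPolynomial σ R) :
    MeasurableSet {x : σ → R | eval x q = 0} :=
  measurable_eval q (measurableSet_singleton 0)

theorem measure_pi_setOf_eval_eq_zero [CommRing R] [IsDomain R] [MeasurableSingletonClass R]
    [MeasurableAdd₂ R] [MeasurableMul₂ R] :
    ∀ {n : ℕ} (μ : Fin n → Measure R) [∀ i, SigmaFinite (μ i)] [∀ i, NullSingletonClass (μ i)]
      {q : MvPolynomial (Fin n) R}, q ≠ 0 → Measure.pi μ {x | eval x q = 0} = 0
  | 0, μ, _, _, q, hq => by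
    obtain ⟨c, rfl⟩ := C_surjective (Fin 0) q
    have hc : c ≠ 0 := by rintro rfl; simp at hq
    simp [hc]
  | n + 1, μ, _, _, q, hq => by
    set F := finSuccEquiv R n q
    have hF : F ≠ 0 := by simpa [F] using hq
    set ν := Measure.pi fun j : Fin n => μ j.succ
    have hbad : ν {z | eval z F.leadingCoeff = 0} = 0 :=
      measure_pi_setOf_eval_eq_zero _ (Polynomial.leadingCoeff_ne_zero.mpr hF)
    have hslice : ∀ z, eval z F.leadingCoeff ≠ 0 → μ 0 {y | eval (Fin.cons y z) q = 0} = 0 := by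
      intro z hz
      have hg : F.map (eval z) ≠ 0 := fun h => hz <| by
        simpa using congrArg (Polynomial.coeff · F.natDegree) h
      simp_rw [eval_eq_eval_mv_eval']
      exact (Polynomial.finite_setOfPred_isRoot hg).countable.measure_zero _
    have hae : ∀ᵐ z ∂ν, μ 0 {y | eval (Fin.cons y z) q = 0} = 0 := by
      filter_upwards [measure_eq_zero_iff_ae_notMem.mp hbad] with z hz using hslice z hz
    rw [← (measurePreserving_piFinSuccAbove μ 0).symm.measure_preimage_equiv,
      Measure.prod_apply_symm ((MeasurableEquiv.piFinSuccAbove _ 0).symm.measurable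
        (measurableSet_setOf_eval_eq_zero q))]
    simp only [MeasurableEquiv.piFinSuccAbove_symm_apply, Fin.succAbove_zero,
      Set.preimage_ofPred_eq, Fin.insertNthEquiv, Equiv.coe_fn_mk, Fin.insertNth_zero']
    exact (lintegral_congr_ae hae).trans lintegral_zero

end MvPolynomial

namespace ProbabilityTheory.iIndepFun

variable {Ω ι R : Type*} [MeasurableSpace Ω] {P : Measure Ω} [IsProbabilityMeasure P]
  [CommRing R] [IsDomain R] [MeasurableSpace R] [MeasurableSingletonClass R]
  [MeasurableAdd₂ R] [MeasurableMul₂ R] {η : ι → Ω → R}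

theorem measure_setOf_eval_eq_zero (hη : ∀ i, Measurable (η i)) (hindep : iIndepFun η P)
    (hatom : ∀ i, NullSingletonClass (P.map (η i))) {q : MvPolynomial ι R} (hq : q ≠ 0) :
    P {ω | eval (fun i => η i ω) q = 0} = 0 := by
  obtain ⟨n, f, hf, q, rfl⟩ := exists_fin_rename q
  have hq : q ≠ 0 := by rintro rfl; simp at hq
  have hηf : Measurable fun ω i => η (f i) ω := measurable_pi_lambda _ fun i => hη (f i)
  have hlaw : P.map (fun ω i => η (f i) ω) = Measure.pi fun i => P.map (η (f i)) :=
    (iIndepFun_iff_map_fun_eq_pi_map fun i => (hη (f i)).aemeasurable).mp (hindep.precomp hf)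
  calc P {ω | eval (fun i => η i ω) (rename f q) = 0}
      = P.map (fun ω i => η (f i) ω) {x | eval x q = 0} := by
        rw [Measure.map_apply hηf (measurableSet_setOf_eval_eq_zero q)]
        simp only [eval_rename]
        rfl
    _ = 0 := by
      rw [hlaw]
      exact measure_pi_setOf_eval_eq_zero _ hq

theorem ae_algebraicIndependent (k : Type*) [Field k] [Countable k] [Algebra k R] [Countable ι]
    (hη : ∀ i, Measurable (η i)) (hindep : iIndepFun η P)
    (hatom : ∀ i, NullSingletonClass (P.map (η i))) :
    ∀ᵐ ω ∂P, AlgebraicIndependent k fun i => η i ω := by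
  have hne : ∀ᵐ ω ∂P, ∀ q : {q : MvPolynomial ι k // q ≠ 0}, aeval (fun i => η i ω) q.1 ≠ 0 := by
    refine ae_all_iff.mpr fun ⟨q, hq⟩ => measure_eq_zero_iff_ae_notMem.mp ?_
    simp only [aeval_def, eval₂_eq_eval_map]
    refine hindep.measure_setOf_eval_eq_zero hη hatom ?_
    exact (map_ne_zero_iff _ (map_injective _ (algebraMap k R).injective)).mpr hq
  filter_upwards [hne] with ω hω
  exact algebraicIndependent_iff.mpr fun q hq => by_contra fun h => hω ⟨q, h⟩ hq

end ProbabilityTheory.iIndepFun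

noncomputable instance PadicInt.measurableSpace {p : ℕ} [Fact p.Prime] : MeasurableSpace ℤ_[p] :=
  borel _

instance PadicInt.borelSpace {p : ℕ} [Fact p.Prime] : BorelSpace ℤ_[p] := ⟨rfl⟩

noncomputable instance Padic.measurableSpace {p : ℕ} [Fact p.Prime] : MeasurableSpace ℚ_[p] :=
  borel _

instance Padic.borelSpace {p : ℕ} [Fact p.Prime] : BorelSpace ℚ_[p] := ⟨rfl⟩

theorem stmt_5 {p : ℕ} [Fact p.Prime] {Ω : Type*} [MeasurableSpace Ω]
    (P : Measure Ω) [IsProbabilityMeasure P]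
    (ξ : ℕ → Ω → ℤ_[p])
    (hmeas : ∀ n, @Measurable Ω ℤ_[p] _ (borel ℤ_[p]) (ξ n))
    (hindep : @iIndepFun Ω ℕ _ (fun _ => ℤ_[p]) (fun _ => borel ℤ_[p]) ξ P)
    (hatom : ∀ n (lam : ℤ_[p]), P {ω | ξ n ω = lam} = 0) :
    ∀ᵐ ω ∂P, AlgebraicIndependent ℚ (fun n => ((ξ n ω : ℤ_[p]) : ℚ_[p])) := by
  -- `ℤ_[p]` unfolds to a subtype, whose comap σ-algebra is not definitionally the Borel one,
  -- so the type of the coercion is fixed before passing to measurability.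
  have hcont : Continuous fun x : ℤ_[p] => (x : ℚ_[p]) := continuous_subtype_val
  have hcoe := hcont.measurable
  have hatom' : ∀ n, NullSingletonClass (P.map fun ω => (ξ n ω : ℚ_[p])) := fun n => by
    have : NullSingletonClass (P.map (ξ n)) := ⟨fun lam => by
      rw [Measure.map_apply (hmeas n) (measurableSet_singleton lam)]
      exact hatom n lam⟩
    have h := NullSingletonClass.map_of_injective (μ := P.map (ξ n)) hcoe Subtype.val_injective
    rwa [Measure.map_map hcoe (hmeas n)] at h
  exact (hindep.comp (fun _ x => (x : ℚ_[p])) fun _ => hcoe).ae_algebraicIndependent ℚ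
    (fun n => hcoe.comp (hmeas n)) hatom'
end

section
/- A nonzero polynomial g with coefficients in J_p that has no root in J_p satisfies: there exists M such that p^M does not divide g(x) for any x in J_p; equivalently, the p-adic valuation of g(x) is bounded uniformly over x ∈ J_p. -/
/-! A continuous function without zeros on a compact space has norm bounded away from `0`.
Applied to `x ↦ g(x)` on the compact ring `ℤ_[p]`, this gives `‖g(x)‖ ≥ c > 0`, whereas
`p ^ M ∣ g(x)` forces `‖g(x)‖ ≤ p ^ (-M)`, which is `< c` for large `M`. -/

theorem Continuous.exists_pos_le_norm {X E : Type*} [TopologicalSpace X] [CompactSpace X]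
    [NormedAddGroup E] {f : X → E} (hf : Continuous f) (hf₀ : ∀ x, f x ≠ 0) :
    ∃ c > 0, ∀ x, c ≤ ‖f x‖ := by
  cases isEmpty_or_nonempty X with
  | inl _ => exact ⟨1, one_pos, isEmptyElim⟩
  | inr _ =>
    obtain ⟨x₀, -, hx₀⟩ := isCompact_univ.exists_isMinOn Set.univ_nonempty hf.norm.continuousOn
    exact ⟨‖f x₀‖, norm_pos_iff.mpr (hf₀ x₀), fun x ↦ hx₀ (Set.mem_univ x)⟩

namespace PadicInt

variable {p : ℕ} [Fact p.Prime]

theorem norm_le_of_pow_dvd {x : ℤ_[p]} {n : ℕ} (h : (p : ℤ_[p]) ^ n ∣ x) :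
    ‖x‖ ≤ (p : ℝ) ^ (-n : ℤ) :=
  (norm_le_pow_iff_mem_span_pow x n).mpr (Ideal.mem_span_singleton.mpr h)

theorem exists_forall_not_pow_dvd_of_continuous {X : Type*} [TopologicalSpace X]
    [CompactSpace X] {f : X → ℤ_[p]} (hf : Continuous f) (hf₀ : ∀ x, f x ≠ 0) :
    ∃ M : ℕ, ∀ x, ¬ (p : ℤ_[p]) ^ M ∣ f x := by
  obtain ⟨c, hc, hle⟩ := hf.exists_pos_le_norm hf₀
  obtain ⟨M, hM⟩ := exists_pow_neg_lt p hc
  exact ⟨M, fun x hdvd ↦ (hle x).not_gt ((norm_le_of_pow_dvd hdvd).trans_lt hM)⟩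

end PadicInt

theorem stmt_6_general {p : ℕ} [Fact p.Prime] (g : Polynomial ℤ_[p])
    (hroot : ∀ x : ℤ_[p], Polynomial.eval x g ≠ 0) :
    ∃ M : ℕ, ∀ x : ℤ_[p], ¬ ((p : ℤ_[p]) ^ M ∣ Polynomial.eval x g) :=
  PadicInt.exists_forall_not_pow_dvd_of_continuous g.continuous hroot

theorem stmt_6 {p : ℕ} [Fact p.Prime] (g : Polynomial ℤ_[p]) (hg : g ≠ 0)
    (hroot : ∀ x : ℤ_[p], Polynomial.eval x g ≠ 0) :
    ∃ M : ℕ, ∀ x : ℤ_[p], ¬ ((p : ℤ_[p]) ^ M ∣ Polynomial.eval x g) :=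
  stmt_6_general g hroot
end

section
/- Let g(x) = h(x) · ∏_{i=1}^{l} (x − λ_i) with h ∈ J_p[x] having no root in J_p, λ_i ∈ J_p, and let M be such that p^M does not divide h(x) for any x ∈ J_p. Then the number of residues x mod p^N with g(x) ≡ 0 (mod p^N) is at most l · p^{N − ⌊(N−M)/l⌋}. -/
/-!
If `p ^ N ∣ h(x) ∏ (x - λᵢ)` while `v_p(h(x)) < M`, the valuations `v_p(x - λᵢ)` add up to more
than `N - M`, so by pigeonhole one of them is at least `k = ⌊(N - M) / l⌋`. Hence every root lies
in one of the `l` balls `x ≡ λᵢ (mod p ^ k)`, and each ball meets only `p ^ (N - k)` residue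
classes modulo `p ^ N`.
-/

open Finset Polynomial

section PrimePowerDivisibility

variable {α : Type*} [CommMonoidWithZero α] [IsCancelMulZero α] {π : α}

theorem Prime.not_pow_add_succ_dvd_mul (hπ : Prime π) {a b : α} {m n : ℕ}
    (ha : ¬π ^ (m + 1) ∣ a) (hb : ¬π ^ (n + 1) ∣ b) : ¬π ^ (m + n + 1) ∣ a * b := by
  rw [pow_dvd_iff_le_emultiplicity, not_le] at ha hb ⊢
  rw [emultiplicity_mul hπ]
  rw [Nat.cast_succ, ENat.lt_natCast_add_one_iff] at ha hb ⊢
  exact_mod_cast add_le_add ha hb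

theorem Prime.not_pow_dvd_mul_prod (hπ : Prime π) {ι : Type*} {b : ι → α} {k : ℕ}
    (s : Finset ι) (hb : ∀ i ∈ s, ¬π ^ (k + 1) ∣ b i) {a : α} {m : ℕ}
    (ha : ¬π ^ (m + 1) ∣ a) : ¬π ^ (m + k * #s + 1) ∣ a * ∏ i ∈ s, b i := by
  classical
  induction s using Finset.induction_on generalizing a m with
  | empty => simpa using ha
  | insert j s hj ih =>
    have hab : ¬π ^ (m + k + 1) ∣ a * b j :=
      hπ.not_pow_add_succ_dvd_mul ha (hb j (mem_insert_self j s))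
    have := ih (fun i hi => hb i (mem_insert_of_mem hi)) hab
    rwa [prod_insert hj, card_insert_of_notMem hj, ← mul_assoc, mul_add_one, ← add_assoc,
      add_right_comm m]

theorem Prime.exists_pow_dvd_of_pow_dvd_mul_prod (hπ : Prime π) {ι : Type*} {b : ι → α}
    {s : Finset ι} {a : α} {M N k : ℕ} (hN : π ^ N ∣ a * ∏ i ∈ s, b i) (ha : ¬π ^ M ∣ a)
    (hMN : M + k * #s ≤ N) : ∃ i ∈ s, π ^ k ∣ b i := by
  obtain _ | m := M
  · simp at ha
  obtain _ | k := k
  · obtain ⟨i, hi⟩ := s.nonempty_iff_ne_empty.2 fun hs => ha <| by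
      subst hs
      simpa using (pow_dvd_pow π (by simpa using hMN)).trans hN
    exact ⟨i, hi, by simp⟩
  by_contra! hb
  exact hπ.not_pow_dvd_mul_prod s hb ha ((pow_dvd_pow π (by linarith)).trans hN)

end PrimePowerDivisibility

namespace PadicInt

variable {p : ℕ} [Fact p.Prime] {k N : ℕ}

theorem exists_mk_span_pow_eq_add_pow_mul (hk : k ≤ N) {c x : ℤ_[p]}
    (hx : (p : ℤ_[p]) ^ k ∣ x - c) :
    ∃ j : Fin (p ^ (N - k)), Ideal.Quotient.mk (Ideal.span {(p : ℤ_[p]) ^ N}) x =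
      Ideal.Quotient.mk (Ideal.span {(p : ℤ_[p]) ^ N}) (c + (p : ℤ_[p]) ^ k * (j : ℕ)) := by
  obtain ⟨y, hy⟩ := hx
  obtain ⟨d, hd⟩ := Ideal.mem_span_singleton.1 (appr_spec (N - k) y)
  refine ⟨⟨y.appr (N - k), appr_lt y (N - k)⟩,
    Ideal.Quotient.eq.2 (Ideal.mem_span_singleton.2 ⟨d, ?_⟩)⟩
  rw [← pow_mul_pow_sub _ hk]
  linear_combination hy + (p : ℤ_[p]) ^ k * hd

theorem natCard_image_mk_span_pow_le {ι : Type*} [Fintype ι] (lam : ι → ℤ_[p]) (hk : k ≤ N)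
    {S : Set ℤ_[p]} (hS : ∀ x ∈ S, ∃ i, (p : ℤ_[p]) ^ k ∣ x - lam i) :
    Nat.card (Ideal.Quotient.mk (Ideal.span {(p : ℤ_[p]) ^ N}) '' S) ≤
      Fintype.card ι * p ^ (N - k) := by
  let f : ι × Fin (p ^ (N - k)) → ℤ_[p] ⧸ Ideal.span {(p : ℤ_[p]) ^ N} :=
    fun ij => Ideal.Quotient.mk _ (lam ij.1 + (p : ℤ_[p]) ^ k * (ij.2 : ℕ))
  have hcover : Ideal.Quotient.mk _ '' S ⊆ Set.range f := by
    rintro _ ⟨x, hx, rfl⟩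
    obtain ⟨i, hi⟩ := hS x hx
    obtain ⟨j, hj⟩ := exists_mk_span_pow_eq_add_pow_mul hk hi
    exact ⟨(i, j), hj.symm⟩
  calc Nat.card (Ideal.Quotient.mk _ '' S) ≤ Nat.card (Set.range f) :=
        Nat.card_mono (Set.finite_range f) hcover
    _ ≤ Nat.card (ι × Fin (p ^ (N - k))) := Finite.card_range_le f
    _ = Fintype.card ι * p ^ (N - k) := by simp [Nat.card_eq_fintype_card]

end PadicInt

theorem stmt_7_general {p : ℕ} [Fact p.Prime] (l M N : ℕ) (hMN : M ≤ N)
    (h : Polynomial ℤ_[p]) (lam : Fin l → ℤ_[p])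
    (hh : ∀ x : ℤ_[p], ¬ ((p : ℤ_[p]) ^ M ∣ Polynomial.eval x h))
    (g : Polynomial ℤ_[p])
    (hg : g = h * ∏ i : Fin l, (Polynomial.X - Polynomial.C (lam i))) :
    Nat.card
        ((Ideal.Quotient.mk (Ideal.span {(p : ℤ_[p]) ^ N})) ''
          {x : ℤ_[p] | (p : ℤ_[p]) ^ N ∣ Polynomial.eval x g}) ≤
      l * p ^ (N - (N - M) / l) := by
  set k := (N - M) / l
  have hkl : M + k * #(univ : Finset (Fin l)) ≤ N := by
    have : k * l ≤ N - M := Nat.div_mul_le_self _ _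
    rw [card_univ, Fintype.card_fin]
    omega
  have hroots : ∀ x ∈ {x : ℤ_[p] | (p : ℤ_[p]) ^ N ∣ g.eval x},
      ∃ i, (p : ℤ_[p]) ^ k ∣ x - lam i := by
    intro x hx
    have hx : (p : ℤ_[p]) ^ N ∣ h.eval x * ∏ i, (x - lam i) := by
      simpa [hg, eval_prod] using hx
    obtain ⟨i, -, hi⟩ := PadicInt.prime_p.exists_pow_dvd_of_pow_dvd_mul_prod hx (hh x) hkl
    exact ⟨i, hi⟩
  have hkN : k ≤ N := (Nat.div_le_self _ _).trans (Nat.sub_le _ _)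
  simpa using PadicInt.natCard_image_mk_span_pow_le lam hkN hroots

theorem stmt_7 {p : ℕ} [Fact p.Prime] (l M N : ℕ) (hMN : M ≤ N) (hM : 0 < M)
    (h : Polynomial ℤ_[p]) (lam : Fin l → ℤ_[p])
    (hh : ∀ x : ℤ_[p], ¬ ((p : ℤ_[p]) ^ M ∣ Polynomial.eval x h))
    (g : Polynomial ℤ_[p])
    (hg : g = h * ∏ i : Fin l, (Polynomial.X - Polynomial.C (lam i))) :
    Nat.card
        ((Ideal.Quotient.mk (Ideal.span {(p : ℤ_[p]) ^ N})) ''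
          {x : ℤ_[p] | (p : ℤ_[p]) ^ N ∣ Polynomial.eval x g}) ≤
      l * p ^ (N - (N - M) / l) :=
  stmt_7_general l M N hMN h lam hh g hg
end

section
/- Let b_1, …, b_k be elements of the p-adic completion B̂ of a free abelian group B of countable rank, and let a be a random element of B̂ such that for some α > 1 and all n, the distribution of a mod p^n B̂ gives each class probability at most p^{−n^α}. Then the probability that a lies in the J_p-submodule of B̂ generated by b_1, …, b_k is 0. -/
open MeasureTheory ENNReal Pointwise

/-- The p-adic completion of the free abelian group `B = ⊕_{n<ω} ℤ` of countable rank. -/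
noncomputable abbrev PadicCompletionOfFree (p : ℕ) :=
  AdicCompletion (Ideal.span {(p : ℤ)}) (ℕ →₀ ℤ)

/-- The ring of p-adic integers, as the p-adic completion of ℤ. -/
noncomputable abbrev PadicIntRing (p : ℕ) :=
  AdicCompletion (Ideal.span {(p : ℤ)}) ℤ

/-!
Since `ℤ` is dense in `J_p`, every `μ ∈ J_p` is `c + p ^ n ν` with `c ∈ {0, …, p ^ n - 1}`. Hence,
modulo `p ^ n B̂`, the `J_p`-span of `b_1, …, b_k` meets at most `p ^ (n k)` residue classes, and
the event `a ∈ span` has probability at most `p ^ (n k) p ^ (-n ^ α)`, which tends to `0` because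
`α > 1`.
-/

open Filter Topology

namespace AdicCompletion

variable {R M : Type*} [CommRing R] [AddCommGroup M] [Module R M]

theorem exists_eq_algebraMap_add_pow_smul (r : R) (μ : AdicCompletion (Ideal.span {r}) R)
    (n : ℕ) : ∃ (c : R) (ν : AdicCompletion (Ideal.span {r}) R),
      μ = algebraMap R _ c + r ^ n • ν := by
  obtain ⟨c, hc⟩ := Submodule.Quotient.mk_surjective _ (eval _ R n μ)
  have hker : μ - algebraMap R _ c ∈ (r ^ n • ⊤ : Submodule R (AdicCompletion _ R)) := by
    rw [← Submodule.ideal_span_singleton_smul, ← Ideal.span_singleton_pow,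
      pow_smul_top_eq_ker_eval (Submodule.fg_span_singleton r), LinearMap.mem_ker, map_sub,
      algebraMap_apply, Algebra.algebraMap_self, RingHom.id_apply, eval_of, Submodule.mkQ_apply, hc,
      sub_self]
  obtain ⟨ν, -, hν⟩ := Submodule.mem_smul_pointwise_iff_exists _ _ _ |>.mp hker
  exact ⟨c, ν, by rw [hν, add_sub_cancel]⟩

theorem exists_sub_sum_smul_mem_pow_smul_top_of_mem_span (r : R) {ι : Type*} [Fintype ι]
    (b : ι → AdicCompletion (Ideal.span {r}) M) {x : AdicCompletion (Ideal.span {r}) M}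
    (hx : x ∈ Submodule.span (AdicCompletion (Ideal.span {r}) R) (Set.range b)) (n : ℕ) :
    ∃ c : ι → R, x - ∑ i, c i • b i ∈ (r ^ n • ⊤ : Submodule R (AdicCompletion _ M)) := by
  obtain ⟨μ, rfl⟩ := Submodule.mem_span_range_iff_exists_fun _ |>.mp hx
  choose c ν hμ using fun i => exists_eq_algebraMap_add_pow_smul r (μ i) n
  refine ⟨c, ?_⟩
  have hsum : ∑ i, μ i • b i - ∑ i, c i • b i = r ^ n • ∑ i, ν i • b i := by
    simp only [hμ, add_smul, algebraMap_smul, smul_assoc, Finset.smul_sum, Finset.sum_add_distrib,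
      add_sub_cancel_left]
  rw [hsum]
  exact Submodule.smul_mem_pointwise_smul _ _ _ Submodule.mem_top

end AdicCompletion

theorem Submodule.exists_fin_sum_smul_sub_mem_smul_top {N ι : Type*} [AddCommGroup N]
    [Fintype ι] {m : ℕ} (hm : 0 < m) (c : ι → ℤ) (b : ι → N) :
    ∃ f : ι → Fin m,
      ∑ i, c i • b i - ∑ i, ((f i : ℕ) : ℤ) • b i ∈ ((m : ℤ) • ⊤ : Submodule ℤ N) := by
  have hm' : (0 : ℤ) < m := by exact_mod_cast hm
  have hnonneg (i : ι) : 0 ≤ c i % m := Int.emod_nonneg _ hm'.ne'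
  have hlt (i : ι) : c i % m < m := Int.emod_lt_of_pos _ hm'
  refine ⟨fun i => ⟨(c i % m).toNat, by have := hlt i; omega⟩, ?_⟩
  have hdiff : ∑ i, c i • b i - ∑ i, ((c i % m).toNat : ℤ) • b i
      = (m : ℤ) • ∑ i, (c i / m) • b i := by
    rw [Finset.smul_sum, ← Finset.sum_sub_distrib]
    refine Finset.sum_congr rfl fun i _ => ?_
    rw [Int.toNat_of_nonneg (hnonneg i), smul_smul, ← sub_smul]
    congr 1
    linear_combination -Int.emod_add_mul_ediv (c i) m
  rw [hdiff]
  exact Submodule.smul_mem_pointwise_smul _ _ _ Submodule.mem_top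

theorem MeasureTheory.measure_le_card_mul_of_subset_preimage_range {Ω Q ι : Type*}
    [MeasurableSpace Ω] [Fintype ι] (μ : Measure Ω) {s : Set Ω} (g : Ω → Q) (q : ι → Q)
    (hs : s ⊆ g ⁻¹' Set.range q) {ε : ℝ≥0∞} (hε : ∀ i, μ {ω | g ω = q i} ≤ ε) :
    μ s ≤ Fintype.card ι * ε := by
  have hcover : s ⊆ ⋃ i, {ω | g ω = q i} := fun ω hω => by
    obtain ⟨i, hi⟩ := hs hω
    exact Set.mem_iUnion.mpr ⟨i, hi.symm⟩
  calc μ s ≤ ∑ i, μ {ω | g ω = q i} := (measure_mono hcover).trans (measure_iUnion_fintype_le _ _)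
    _ ≤ ∑ _i : ι, ε := Finset.sum_le_sum fun i _ => hε i
    _ = Fintype.card ι * ε := by rw [Finset.sum_const, nsmul_eq_mul, Finset.card_univ]

theorem Real.tendsto_mul_sub_rpow_atTop_atBot (c : ℝ) {α : ℝ} (hα : 1 < α) :
    Tendsto (fun x : ℝ => c * x - x ^ α) atTop atBot := by
  -- `c * x - x ^ α = x ^ α * (c * x ^ (1 - α) - 1)` and the second factor tends to `-1`.
  have hsmall : Tendsto (fun x : ℝ => c * x ^ (1 - α) - 1) atTop (𝓝 (c * 0 - 1)) :=
    ((tendsto_rpow_neg_atTop (by linarith : 0 < α - 1)).const_mul c).sub_const 1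
      |>.congr' (by filter_upwards with x; rw [neg_sub])
  refine (Tendsto.atTop_mul_neg (by norm_num) (tendsto_rpow_atTop (by linarith)) hsmall).congr' ?_
  filter_upwards [eventually_gt_atTop 0] with x hx
  rw [mul_sub, mul_one, mul_left_comm, ← Real.rpow_add hx, add_sub_cancel, Real.rpow_one]

theorem Real.tendsto_pow_pow_mul_rpow_neg_rpow {b : ℝ} (hb : 1 < b) (k : ℕ) {α : ℝ} (hα : 1 < α) :
    Tendsto (fun n : ℕ => (b ^ n) ^ k * b ^ (-(n : ℝ) ^ α)) atTop (𝓝 0) := by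
  have hexp := (tendsto_rpow_atBot_of_base_gt_one b hb).comp
    ((tendsto_mul_sub_rpow_atTop_atBot k hα).comp tendsto_natCast_atTop_atTop)
  refine hexp.congr fun n => ?_
  simp only [Function.comp_apply]
  rw [sub_eq_add_neg, Real.rpow_add (by linarith), ← pow_mul, ← Real.rpow_natCast]
  push_cast
  ring_nf

theorem stmt_8_general (p : ℕ) (hp : p.Prime) {Ω : Type*} [MeasurableSpace Ω]
    (P : Measure Ω)
    (k : ℕ) (b : Fin k → PadicCompletionOfFree p)
    (a : Ω → PadicCompletionOfFree p) (α : ℝ) (hα : 1 < α)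
    (hdist : ∀ n : ℕ,
      ∀ x : PadicCompletionOfFree p ⧸ (((p : ℤ) ^ n • ⊤ : Submodule ℤ (PadicCompletionOfFree p))),
        P {ω | Submodule.Quotient.mk (a ω) = x} ≤ ENNReal.ofReal ((p : ℝ) ^ (-((n : ℝ) ^ α)))) :
    P {ω | a ω ∈ Submodule.span (PadicIntRing p) (Set.range b)} = 0 := by
  set E := {ω | a ω ∈ Submodule.span (PadicIntRing p) (Set.range b)}
  have hcover (n : ℕ) : E ⊆ (fun ω => Submodule.Quotient.mk (a ω)) ⁻¹' Set.range
      fun f : Fin k → Fin (p ^ n) =>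
        Submodule.Quotient.mk (p := ((p : ℤ) ^ n • ⊤ : Submodule ℤ _)) (∑ i, ((f i : ℕ) : ℤ) • b i) := by
    intro ω hω
    obtain ⟨c, hc⟩ :=
      AdicCompletion.exists_sub_sum_smul_mem_pow_smul_top_of_mem_span (p : ℤ) b hω n
    obtain ⟨f, hf⟩ := Submodule.exists_fin_sum_smul_sub_mem_smul_top (pow_pos hp.pos n) c b
    push_cast at hf
    have hdiff := Submodule.add_mem _ hc hf
    rw [sub_add_sub_cancel] at hdiff
    exact ⟨f, ((Submodule.Quotient.eq _).mpr hdiff).symm⟩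
  have hbound (n : ℕ) : P E ≤ ENNReal.ofReal (((p : ℝ) ^ n) ^ k * (p : ℝ) ^ (-(n : ℝ) ^ α)) := by
    refine (measure_le_card_mul_of_subset_preimage_range P _ _ (hcover n) fun _ => hdist n _).trans
      (le_of_eq ?_)
    rw [ENNReal.ofReal_mul (by positivity), Fintype.card_fun, Fintype.card_fin, Fintype.card_fin]
    norm_cast
  have hlim := ENNReal.tendsto_ofReal
    (Real.tendsto_pow_pow_mul_rpow_neg_rpow (b := p) (by exact_mod_cast hp.one_lt) k hα)
  rw [ENNReal.ofReal_zero] at hlim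
  exact le_zero_iff.mp (ge_of_tendsto' hlim hbound)

theorem stmt_8 (p : ℕ) (hp : p.Prime) {Ω : Type*} [MeasurableSpace Ω]
    (P : Measure Ω) [IsProbabilityMeasure P]
    (k : ℕ) (b : Fin k → PadicCompletionOfFree p)
    (a : Ω → PadicCompletionOfFree p) (α : ℝ) (hα : 1 < α)
    (hdist : ∀ n : ℕ,
      ∀ x : PadicCompletionOfFree p ⧸ (((p : ℤ) ^ n • ⊤ : Submodule ℤ (PadicCompletionOfFree p))),
        P {ω | Submodule.Quotient.mk (a ω) = x} ≤ ENNReal.ofReal ((p : ℝ) ^ (-((n : ℝ) ^ α)))) :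
    P {ω | a ω ∈ Submodule.span (PadicIntRing p) (Set.range b)} = 0 :=
  stmt_8_general p hp P k b a α hα hdist
end

section
/- (Pontryagin's criterion) A countable torsion-free abelian group is free if and only if every finite-rank subgroup is free, where finite rank means the subgroup embeds in a finite-dimensional ℚ-vector space (equivalently, has finite maximal number of ℤ-linearly independent elements). -/
/-!
A free abelian group is torsion-free, and a finite-rank subgroup of it lies in the saturation of
a finitely generated subgroup; since the span of finitely many basis vectors is saturated, the
subgroup is finitely generated, hence free.

Conversely, enumerate `G` as `g₀, g₁, …` and let `Sₙ` be the saturation of `⟨g₀, …, gₙ₋₁⟩`.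
Scaling an independent family of `Sₙ` by nonzero integers moves it into `⟨g₀, …, gₙ₋₁⟩` and keeps
it independent, so `Sₙ` has rank at most `n`; by hypothesis it is free, so its basis is finite.
Each quotient `Sₙ₊₁ / Sₙ` is then finitely generated and torsion-free (because `Sₙ` is saturated),
hence free, so a basis of `Sₙ` extends to one of `Sₙ₊₁`, and the union of these bases is a basis
of `G`.
-/

/-- A subgroup has finite rank if there is a finite bound on the cardinality of
ℤ-linearly independent subsets of it. -/
def FiniteRankSubgroup {G : Type*} [AddCommGroup G] (H : AddSubgroup G) : Prop :=
  ∃ n : ℕ, ∀ s : Finset G, (↑s : Set G) ⊆ (H : Set G) →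
    LinearIndependent ℤ (fun x : (s : Set G) => (x : G)) → s.card ≤ n

open Submodule Set

namespace Submodule

variable {R M : Type*} [CommRing R] [IsDomain R] [AddCommGroup M] [Module R M]

def saturation (A : Submodule R M) : Submodule R M where
  carrier := {x | ∃ r : R, r ≠ 0 ∧ r • x ∈ A}
  zero_mem' := ⟨1, one_ne_zero, by simp⟩
  add_mem' := by
    rintro x y ⟨r, hr, hrx⟩ ⟨s, hs, hsy⟩
    refine ⟨s * r, mul_ne_zero hs hr, ?_⟩
    rw [smul_add, mul_smul, mul_comm, mul_smul]
    exact A.add_mem (A.smul_mem s hrx) (A.smul_mem r hsy)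
  smul_mem' := by
    rintro c x ⟨r, hr, hrx⟩
    exact ⟨r, hr, by rw [smul_comm]; exact A.smul_mem c hrx⟩

theorem le_saturation (A : Submodule R M) : A ≤ A.saturation :=
  fun x hx => ⟨1, one_ne_zero, by simpa using hx⟩

theorem saturation_mono {A B : Submodule R M} (h : A ≤ B) : A.saturation ≤ B.saturation :=
  fun _ ⟨r, hr, hrx⟩ => ⟨r, hr, h hrx⟩

theorem saturation_bot [Module.IsTorsionFree R M] : (⊥ : Submodule R M).saturation = ⊥ :=
  eq_bot_iff.mpr fun _ ⟨_, hr, hrx⟩ => (smul_eq_zero_iff_right hr).mp hrx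

instance isTorsionFree_quotient_saturation (A : Submodule R M) :
    Module.IsTorsionFree R (M ⧸ A.saturation) := by
  refine Module.isTorsionFree_iff_smul_eq_zero.mpr fun r x hrx =>
    or_iff_not_imp_left.mpr fun hr => ?_
  obtain ⟨x, rfl⟩ := Quotient.mk_surjective _ x
  rw [← Quotient.mk_smul, Quotient.mk_eq_zero] at hrx
  obtain ⟨s, hs, hsx⟩ := hrx
  exact (Quotient.mk_eq_zero _).mpr ⟨s * r, mul_ne_zero hs hr, by rwa [mul_smul]⟩

theorem _root_.Module.Basis.saturation_span_image {ι : Type*} (b : Module.Basis ι R M)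
    (s : Set ι) : (span R (b '' s)).saturation = span R (b '' s) := by
  refine le_antisymm (fun x ⟨r, hr, hrx⟩ => ?_) (le_saturation _)
  rw [b.mem_span_image, map_smul, Finsupp.support_smul_eq hr] at hrx
  exact b.mem_span_image.mpr hrx

theorem FG.saturation [IsNoetherianRing R] [Module.Free R M] {A : Submodule R M} (hA : A.FG) :
    A.saturation.FG := by
  classical
  obtain ⟨J, rfl⟩ := hA
  let b := Module.Free.chooseBasis R M
  let T := J.biUnion fun x => (b.repr x).support
  have hJ : span R (J : Set M) ≤ span R (b '' T) := span_le.mpr fun x hx =>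
    b.mem_span_image.mpr fun i hi => Finset.mem_biUnion.mpr ⟨x, hx, hi⟩
  refine (fg_span ((T.finite_toSet).image b)).of_le ?_
  exact (saturation_mono hJ).trans (b.saturation_span_image T).le

end Submodule

section Domain

variable {R M ι : Type*} [CommRing R] [IsDomain R] [AddCommGroup M] [Module R M]

theorem LinearIndependent.smul_of_ne_zero {v : ι → M} (hv : LinearIndependent R v) {c : ι → R}
    (hc : ∀ i, c i ≠ 0) : LinearIndependent R (fun i => c i • v i) := by
  refine linearIndependent_iff'.mpr fun t g hg i hi => ?_
  have := linearIndependent_iff'.mp hv t (fun j => g j * c j)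
    (by simpa only [mul_smul] using hg) i hi
  exact (mul_eq_zero.mp this).resolve_right (hc i)

theorem LinearIndependent.cardinalMk_le_of_subset_saturation_span {v : ι → M}
    (hv : LinearIndependent R v) (w : Finset M)
    (hvw : range v ⊆ (span R (w : Set M)).saturation) : Cardinal.mk ι ≤ w.card := by
  choose c hc hcv using fun i => hvw (mem_range_self i)
  simpa using linearIndependent_le_span' _ (hv.smul_of_ne_zero hc) w (range_subset_iff.mpr hcv)

theorem Submodule.finite_of_le_saturation_span {N : Submodule R M} [Module.Free R N] (w : Finset M)
    (hN : N ≤ (span R (w : Set M)).saturation) : Module.Finite R N := by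
  let b := Module.Free.chooseBasis R N
  have hb : LinearIndependent R (fun i => (b i : M)) :=
    b.linearIndependent.map' N.subtype N.ker_subtype
  have hcard := hb.cardinalMk_le_of_subset_saturation_span w
    (range_subset_iff.mpr fun i => hN (b i).2)
  have : Finite (Module.Free.ChooseBasisIndex R N) :=
    Cardinal.mk_lt_aleph0_iff.mp (hcard.trans_lt Cardinal.natCast_lt_aleph0)
  exact Module.Finite.of_basis b

instance Submodule.free_map_mkQ_saturation [IsPrincipalIdealRing R] (A N : Submodule R M)
    [Module.Finite R N] : Module.Free R (N.map A.saturation.mkQ) :=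
  have : Module.Finite R (N.map A.saturation.mkQ) :=
    Module.Finite.iff_fg.mpr ((Module.Finite.iff_fg.mp ‹_›).map _)
  Module.free_of_finite_type_torsion_free'

end Domain

section Chain

variable {R M : Type*} [Ring R] [AddCommGroup M] [Module R M]

theorem Submodule.exists_linearIndepOn_span_eq_of_free_map_mkQ {N N' : Submodule R M}
    (hNN' : N ≤ N') [Module.Free R (N'.map N.mkQ)] {B : Set M} (hB : LinearIndepOn R id B)
    (hBN : span R B = N) :
    ∃ B' : Set M, B ⊆ B' ∧ LinearIndepOn R id B' ∧ span R B' = N' := by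
  let Q := N'.map N.mkQ
  let b := Module.Free.chooseBasis R Q
  choose c _ hc using fun i => (b i).2
  have hQ : span R (range (N.mkQ ∘ c)) = Q := by
    rw [show N.mkQ ∘ c = Q.subtype ∘ b from funext hc, range_comp, ← map_span, b.span_eq,
      map_top, range_subtype]
  have hcind : LinearIndependent R (N.mkQ ∘ c) := by
    rw [show N.mkQ ∘ c = Q.subtype ∘ b from funext hc]
    exact b.linearIndependent.map' Q.subtype Q.ker_subtype
  refine ⟨B ∪ range c, subset_union_left, ?_, ?_⟩
  · refine hB.union_id_of_quotient (hBN ▸ subset_span) ?_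
    simpa only [image_univ] using (linearIndepOn_univ_iff.mpr hcind).image_of_comp c N.mkQ
  · rw [span_union, hBN, ← comap_map_mkQ, map_span, ← range_comp, hQ, comap_map_mkQ,
      sup_eq_right.mpr hNN']

theorem Module.Free.of_chain (S : ℕ → Submodule R M) (h0 : S 0 = ⊥)
    (hS : ∀ n, S n ≤ S (n + 1)) (hfree : ∀ n, Module.Free R ((S (n + 1)).map (S n).mkQ))
    (hcover : ∀ x : M, ∃ n, x ∈ S n) : Module.Free R M := by
  choose! extend hsub hind hspan using
    fun n (B : Set M) (hB : LinearIndepOn R id B ∧ span R B = S n) =>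
    have := hfree n
    Submodule.exists_linearIndepOn_span_eq_of_free_map_mkQ (hS n) hB.1 hB.2
  let B : ℕ → Set M := fun n => Nat.rec ∅ (fun n Bn => extend n Bn) n
  have hB : ∀ n, LinearIndepOn R id (B n) ∧ span R (B n) = S n := by
    intro n
    induction n with
    | zero => exact ⟨linearIndepOn_empty R id, by rw [h0]; exact span_empty⟩
    | succ n ih => exact ⟨hind n _ ih, hspan n _ ih⟩
  have hmono : Monotone B := monotone_nat_of_le_succ fun n => hsub n _ (hB n)
  have hUind : LinearIndepOn R id (⋃ n, B n) :=
    linearIndepOn_iUnion_of_directed hmono.directed_le fun n => (hB n).1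
  have hUspan : ⊤ ≤ span R (range ((↑) : (⋃ n, B n) → M)) := fun x _ => by
    obtain ⟨n, hn⟩ := hcover x
    rw [Subtype.range_coe]
    exact span_mono (subset_iUnion B n) ((hB n).2 ▸ hn)
  exact Module.Free.of_basis (Module.Basis.mk hUind hUspan)

end Chain

namespace FiniteRankSubgroup

variable {G : Type*} [AddCommGroup G]

theorem exists_finset_le_saturation {H : AddSubgroup G} (hH : FiniteRankSubgroup H) :
    ∃ J : Finset G, AddSubgroup.toIntSubmodule H ≤ (span ℤ (J : Set G)).saturation := by
  obtain ⟨n, hn⟩ := hH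
  obtain ⟨I, hI, hmax⟩ := exists_maximal_linearIndepOn ℤ ((↑) : H → G)
  have hIind : LinearIndepOn ℤ id (((↑) : H → G) '' I) :=
    (linearIndepOn_iff_image Subtype.val_injective.injOn).mp hI
  have hfin : (((↑) : H → G) '' I).Finite := by
    by_contra hinf
    obtain ⟨s, hs, hcard⟩ := Set.Infinite.exists_subset_card_eq hinf (n + 1)
    have := hn s (hs.trans (image_subset_range _ _ |>.trans Subtype.range_coe.le)) (hIind.mono hs)
    omega
  refine ⟨hfin.toFinset, fun x hx => ?_⟩
  rw [Finite.coe_toFinset]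
  by_cases hxI : (⟨x, hx⟩ : H) ∈ I
  · exact le_saturation _ (subset_span ⟨_, hxI, rfl⟩)
  · exact hmax _ hxI

theorem free [Module.Free ℤ G] {H : AddSubgroup G} (hH : FiniteRankSubgroup H) :
    Module.Free ℤ H := by
  obtain ⟨J, hJ⟩ := hH.exists_finset_le_saturation
  have : Module.Finite ℤ (AddSubgroup.toIntSubmodule H) :=
    Module.Finite.iff_fg.mpr ((fg_span J.finite_toSet).saturation.of_le hJ)
  change Module.Free ℤ (AddSubgroup.toIntSubmodule H)
  infer_instance

end FiniteRankSubgroup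

theorem finiteRankSubgroup_saturation_span {G : Type*} [AddCommGroup G] (w : Finset G) :
    FiniteRankSubgroup (span ℤ (w : Set G)).saturation.toAddSubgroup :=
  ⟨w.card, fun s hs hind => by
    simpa using hind.cardinalMk_le_of_subset_saturation_span w (by simpa using hs)⟩

theorem stmt_11 (G : Type*) [AddCommGroup G] [Countable G]
    [NoZeroSMulDivisors ℤ G] :
    Module.Free ℤ G ↔
      ∀ H : AddSubgroup G, FiniteRankSubgroup H → Module.Free ℤ H := by
  classical
  refine ⟨fun _ H hH => hH.free, fun hfree => ?_⟩
  obtain ⟨f, hf⟩ := exists_surjective_nat G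
  let w : ℕ → Finset G := fun n => (Finset.range n).image f
  let S : ℕ → Submodule ℤ G := fun n => (span ℤ (w n : Set G)).saturation
  have hSfin (n : ℕ) : Module.Finite ℤ (S n) :=
    have : Module.Free ℤ (S n) := hfree _ (finiteRankSubgroup_saturation_span (w n))
    finite_of_le_saturation_span (w n) le_rfl
  refine Module.Free.of_chain S (by simpa [S, w] using saturation_bot) (fun n => ?_)
    (fun n => have := hSfin (n + 1); inferInstance) (fun x => ?_)
  · exact saturation_mono (span_mono (Finset.coe_subset.mpr
      (Finset.image_subset_image (Finset.range_subset_range.mpr n.le_succ))))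
  · obtain ⟨m, rfl⟩ := hf x
    exact ⟨m + 1, le_saturation _
      (subset_span (Finset.mem_image_of_mem f (Finset.self_mem_range_succ m)))⟩
end
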